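/- Let λ : ℝ → ℝ be twice differentiable, let Λ : ℝ → ℝ be differentiable with Λ′ = λ, fix δ ∈ {0,1}, reals h₀, h*, φ₀, φ*, and constants m > 0, A ≥ 0, B ≥ 0. Let u ∈ [0,1] and set ψ = φ₀ + u·φ*. Assume h₀ + u·h* ≥ m, λ(ψ) > 0, λ(ψ)·λ″(ψ) − λ′(ψ)² ≥ −A·λ(ψ)², and λ′(ψ) ≤ B. Then the function ω(u) = δ·log(h₀ + u·h*) + δ·log λ(φ₀ + u·φ*) − Λ(φ₀ + u·φ*) satisfies ω″(u) ≥ −( δ·h*²/m² + (A + B)·φ*² ). -/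

import Mathlib

/-!
Along the affine path `v ↦ (h₀ + v h*, φ₀ + v φ*)` the three terms of `ω` have explicit second
derivatives: `-δ h*² / (h₀ + u h*)²` for the log-Jacobian term, `δ (λλ'' - λ'²)/λ² · φ*²` for the
log-hazard term and `-λ' φ*²` for the cumulative hazard term. The first is at least `-δ h*²/m²`
because `h₀ + u h* ≥ m`, the second at least `-δ A φ*² ≥ -A φ*²` by the curvature assumption on `λ`,
and the third at least `-B φ*²` because `λ' ≤ B`.
-/

open Filter Topology

theorem deriv_deriv_eq_of_eventually_hasDerivAt {f f' : ℝ → ℝ} {x c : ℝ}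
    (hf : ∀ᶠ y in 𝓝 x, HasDerivAt f (f' y) y) (hf' : HasDerivAt f' c x) :
    deriv (deriv f) x = c := by
  have hderiv : deriv f =ᶠ[𝓝 x] f' := hf.mono fun y hy => hy.deriv
  rw [hderiv.deriv_eq, hf'.deriv]

theorem hasDerivAt_affine (a b x : ℝ) : HasDerivAt (fun v => a + v * b) b x := by
  simpa using ((hasDerivAt_id x).mul_const b).const_add a

section AffinePath

variable {a b x : ℝ}

theorem HasDerivAt.comp_affine {f : ℝ → ℝ} {f' : ℝ} (hf : HasDerivAt f f' (a + x * b)) :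
    HasDerivAt (fun v => f (a + v * b)) (f' * b) x :=
  hf.comp x (hasDerivAt_affine a b x)

theorem hasDerivAt_log_affine (hx : a + x * b ≠ 0) :
    HasDerivAt (fun v => Real.log (a + v * b)) (b / (a + x * b)) x :=
  (hasDerivAt_affine a b x).log hx

theorem hasDerivAt_div_affine (hx : a + x * b ≠ 0) :
    HasDerivAt (fun v => b / (a + v * b)) (-(b ^ 2 / (a + x * b) ^ 2)) x :=
  ((hasDerivAt_const x b).div (hasDerivAt_affine a b x) hx).congr_deriv (by ring)

variable {f : ℝ → ℝ}

theorem hasDerivAt_log_comp_affine (hf : DifferentiableAt ℝ f (a + x * b))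
    (hx : f (a + x * b) ≠ 0) :
    HasDerivAt (fun v => Real.log (f (a + v * b)))
      (deriv f (a + x * b) * b / f (a + x * b)) x :=
  hf.hasDerivAt.comp_affine.log hx

theorem hasDerivAt_logDeriv_comp_affine (hf : DifferentiableAt ℝ f (a + x * b))
    (hf' : DifferentiableAt ℝ (deriv f) (a + x * b)) (hx : f (a + x * b) ≠ 0) :
    HasDerivAt (fun v => deriv f (a + v * b) * b / f (a + v * b))
      ((f (a + x * b) * deriv (deriv f) (a + x * b) - deriv f (a + x * b) ^ 2)
        / f (a + x * b) ^ 2 * b ^ 2) x :=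
  ((hf'.hasDerivAt.comp_affine.mul_const b).div hf.hasDerivAt.comp_affine hx).congr_deriv
    (by ring)

end AffinePath

theorem deriv_deriv_loglik_affine {lam Lam : ℝ → ℝ} (hlam1 : Differentiable ℝ lam)
    (hLam : ∀ x, HasDerivAt Lam (lam x) x) (δ h₀ hs φ₀ φs u : ℝ)
    (hlam2 : DifferentiableAt ℝ (deriv lam) (φ₀ + u * φs)) (hh : h₀ + u * hs ≠ 0) (hlam : lam (φ₀ + u * φs) ≠ 0) :
    deriv (deriv fun v => δ * Real.log (h₀ + v * hs)
        + δ * Real.log (lam (φ₀ + v * φs)) - Lam (φ₀ + v * φs)) u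
      = δ * -(hs ^ 2 / (h₀ + u * hs) ^ 2)
        + δ * ((lam (φ₀ + u * φs) * deriv (deriv lam) (φ₀ + u * φs)
          - deriv lam (φ₀ + u * φs) ^ 2) / lam (φ₀ + u * φs) ^ 2 * φs ^ 2)
        - deriv lam (φ₀ + u * φs) * φs ^ 2 := by
  have hcont : Continuous fun v => (h₀ + v * hs, lam (φ₀ + v * φs)) := by
    have := hlam1.continuous
    fun_prop
  have hnonzero : ∀ᶠ v in 𝓝 u, h₀ + v * hs ≠ 0 ∧ lam (φ₀ + v * φs) ≠ 0 :=
    hcont.continuousAt.eventually (isOpen_ne.prod isOpen_ne |>.mem_nhds ⟨hh, hlam⟩)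
  refine deriv_deriv_eq_of_eventually_hasDerivAt (f' := fun v => δ * (hs / (h₀ + v * hs))
      + δ * (deriv lam (φ₀ + v * φs) * φs / lam (φ₀ + v * φs)) - lam (φ₀ + v * φs) * φs)
    (hnonzero.mono fun v ⟨hv, hlamv⟩ => ?_) ?_
  · exact ((hasDerivAt_log_affine hv).const_mul δ).add
      ((hasDerivAt_log_comp_affine (hlam1 _) hlamv).const_mul δ)
      |>.sub (hLam _).comp_affine
  · exact (((hasDerivAt_div_affine hh).const_mul δ).add
      ((hasDerivAt_logDeriv_comp_affine (hlam1 _) hlam2 hlam).const_mul δ)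
      |>.sub ((hlam1 _).hasDerivAt.comp_affine.mul_const φs)).congr_deriv (by ring)

theorem second_deriv_loglik_lower_bound_general
    (lam Lam : ℝ → ℝ)
    (hlam1 : Differentiable ℝ lam)
    (hlam2 : Differentiable ℝ (deriv lam))
    (hLam : ∀ x, HasDerivAt Lam (lam x) x)
    (δ : ℝ) (hδ : δ = 0 ∨ δ = 1)
    (h₀ hs φ₀ φs m A B : ℝ) (hm : 0 < m) (hA : 0 ≤ A)
    (u : ℝ)
    (hge : m ≤ h₀ + u * hs)
    (hlam_pos : 0 < lam (φ₀ + u * φs))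
    (hlow : lam (φ₀ + u * φs) * deriv (deriv lam) (φ₀ + u * φs)
        - (deriv lam (φ₀ + u * φs)) ^ 2 ≥ -A * (lam (φ₀ + u * φs)) ^ 2)
    (hderiv_ub : deriv lam (φ₀ + u * φs) ≤ B)
    (ω : ℝ → ℝ)
    (hω : ∀ v, ω v = δ * Real.log (h₀ + v * hs)
        + δ * Real.log (lam (φ₀ + v * φs)) - Lam (φ₀ + v * φs)) :
    deriv (deriv ω) u ≥ -(δ * hs ^ 2 / m ^ 2 + (A + B) * φs ^ 2) := by
  have hH : 0 < h₀ + u * hs := hm.trans_le hge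
  rw [funext hω, deriv_deriv_loglik_affine hlam1 hLam δ h₀ hs φ₀ φs u (hlam2 _) hH.ne'
    hlam_pos.ne']
  set ψ := φ₀ + u * φs
  obtain ⟨hδ₀, hδ₁⟩ : 0 ≤ δ ∧ δ ≤ 1 := by rcases hδ with rfl | rfl <;> norm_num
  have hjac : -(δ * hs ^ 2 / m ^ 2) ≤ δ * -(hs ^ 2 / (h₀ + u * hs) ^ 2) := by
    rw [mul_neg, mul_div_assoc, neg_le_neg_iff]
    gcongr
  have hratio : -A ≤ (lam ψ * deriv (deriv lam) ψ - deriv lam ψ ^ 2) / lam ψ ^ 2 :=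
    (le_div_iff₀ (by positivity)).2 hlow
  have hcurv : -A * φs ^ 2
      ≤ δ * ((lam ψ * deriv (deriv lam) ψ - deriv lam ψ ^ 2) / lam ψ ^ 2 * φs ^ 2) := by
    nlinarith [mul_nonneg hA (sq_nonneg φs), mul_nonneg hδ₀ (sq_nonneg φs)]
  have hslope : deriv lam ψ * φs ^ 2 ≤ B * φs ^ 2 := by gcongr
  linarith

/-- Lower curvature bound (display (A3)) in the proof of Lemma 2 of
"Deep partially linear transformation model for right-censored survival data". -/
theorem second_deriv_loglik_lower_bound
    (lam Lam : ℝ → ℝ)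
    (hlam1 : Differentiable ℝ lam)
    (hlam2 : Differentiable ℝ (deriv lam))
    (hLam : ∀ x, HasDerivAt Lam (lam x) x)
    (δ : ℝ) (hδ : δ = 0 ∨ δ = 1)
    (h₀ hs φ₀ φs m A B : ℝ) (hm : 0 < m) (hA : 0 ≤ A) (hB : 0 ≤ B)
    (u : ℝ) (hu : u ∈ Set.Icc (0 : ℝ) 1)
    (hge : m ≤ h₀ + u * hs)
    (hlam_pos : 0 < lam (φ₀ + u * φs))
    (hlow : lam (φ₀ + u * φs) * deriv (deriv lam) (φ₀ + u * φs)
        - (deriv lam (φ₀ + u * φs)) ^ 2 ≥ -A * (lam (φ₀ + u * φs)) ^ 2)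
    (hderiv_ub : deriv lam (φ₀ + u * φs) ≤ B)
    (ω : ℝ → ℝ)
    (hω : ∀ v, ω v = δ * Real.log (h₀ + v * hs)
        + δ * Real.log (lam (φ₀ + v * φs)) - Lam (φ₀ + v * φs)) :
    deriv (deriv ω) u ≥ -(δ * hs ^ 2 / m ^ 2 + (A + B) * φs ^ 2) :=
  second_deriv_loglik_lower_bound_general lam Lam hlam1 hlam2 hLam δ hδ h₀ hs φ₀ φs m A B hm hA u
    hge hlam_pos hlow hderiv_ub ω hω
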